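/- arXiv:2605.10861 — 3 statements merged into one kernel-verified Lean document; each statement's English description precedes it below -/
import Mathlib

section
/- Let G = Θ(2, l2, 2) where l2 is odd and l2 ≥ 3. Then P_ℓ(G,3) = P(G,3). -/
open SimpleGraph Finset

/-- A proper `L`-coloring of `G`: each vertex gets a color from its list and adjacent
vertices get different colors. -/
def ProperLColoring {V : Type*} (G : SimpleGraph V) (L : V → Finset ℕ) (f : V → ℕ) : Prop :=
  (∀ v, f v ∈ L v) ∧ ∀ ⦃u w⦄, G.Adj u w → f u ≠ f w

/-- `P(G,L)`: the number of proper `L`-colorings of `G`. -/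
noncomputable def PList {V : Type*} (G : SimpleGraph V) (L : V → Finset ℕ) : ℕ :=
  Nat.card {f : V → ℕ // ProperLColoring G L f}

/-- `P(G,m)`: the number of proper colorings of `G` with colors from `{1, …, m}`. -/
noncomputable def PChrom {V : Type*} (G : SimpleGraph V) (m : ℕ) : ℕ :=
  PList G (fun _ => Finset.Icc 1 m)

/-- The list color function `P_ℓ(G,m)`: the minimum of `P(G,L)` over all `m`-assignments. -/
noncomputable def PListFn {V : Type*} (G : SimpleGraph V) (m : ℕ) : ℕ :=
  sInf {n | ∃ L : V → Finset ℕ, (∀ v, (L v).card = m) ∧ n = PList G L}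

/-- `G` is enumeratively chromatic-choosable: `P_ℓ(G,m) = P(G,m)` for all `m ∈ ℕ = {1,2,…}`. -/
def EnumChromChoosable {V : Type*} (G : SimpleGraph V) : Prop :=
  ∀ m : ℕ, 1 ≤ m → PListFn G m = PChrom G m

/-- Vertices of the theta graph `Θ(l1,l2,l3)`: the end vertices `u = Sum.inl false` and
`v = Sum.inl true`, together with the `lᵢ - 1` internal vertices of the `i`-th path. -/
abbrev ThetaVert (l1 l2 l3 : ℕ) : Type :=
  Bool ⊕ (Σ i : Fin 3, Fin (![l1, l2, l3] i - 1))

/-- Edges of the theta graph (up to symmetrization): the internal vertices of the `i`-th path,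
in order, form a path from `u` to `v`; if some path has length 1 then `u` and `v` are adjacent. -/
def thetaRel (l1 l2 l3 : ℕ) : ThetaVert l1 l2 l3 → ThetaVert l1 l2 l3 → Prop :=
  fun a b =>
    match a, b with
    | Sum.inl false, Sum.inl true => l1 = 1 ∨ l2 = 1 ∨ l3 = 1
    | Sum.inl false, Sum.inr ⟨_, j⟩ => (j : ℕ) = 0
    | Sum.inr ⟨i, j⟩, Sum.inl true => (j : ℕ) + 2 = ![l1, l2, l3] i
    | Sum.inr ⟨i, j⟩, Sum.inr ⟨i', j'⟩ => i = i' ∧ (j : ℕ) + 1 = (j' : ℕ)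
    | _, _ => False

/-- The theta graph `Θ(l1,l2,l3)`: two end vertices joined by three internally disjoint
paths of lengths `l1`, `l2`, `l3`. -/
def thetaGraph (l1 l2 l3 : ℕ) : SimpleGraph (ThetaVert l1 l2 l3) :=
  SimpleGraph.fromRel (thetaRel l1 l2 l3)

/-- A DP-cover `(L, H)` of `G`. -/
structure DPCover {V : Type*} (G : SimpleGraph V) (W : Type*) where
  H : SimpleGraph W
  L : V → Set W
  partition : ∀ w : W, ∃! v : V, w ∈ L v
  matching : ∀ ⦃u v : V⦄, G.Adj u v → ∀ ⦃x y y' : W⦄, x ∈ L u → y ∈ L v → y' ∈ L v →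
      H.Adj x y → H.Adj x y' → y = y'
  cross : ∀ ⦃x y : W⦄, H.Adj x y → ∃ u v, G.Adj u v ∧ x ∈ L u ∧ y ∈ L v

/-- A proper `H`-coloring: an independent transversal of the cover. -/
def DPCover.IsProperColoring {V W : Type*} {G : SimpleGraph V} (C : DPCover G W)
    (T : Set W) : Prop :=
  (∀ v : V, ∃! w : W, w ∈ T ∧ w ∈ C.L v) ∧ ∀ ⦃x y⦄, x ∈ T → y ∈ T → ¬ C.H.Adj x y

/-- `P_DP(G, H)`: the number of proper `H`-colorings of `G`. -/
noncomputable def PDPCount {V W : Type*} {G : SimpleGraph V} (C : DPCover G W) : ℕ :=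
  Nat.card {T : Set W // C.IsProperColoring T}

/-- The DP color function `P_DP(G,m)`: the minimum of `P_DP(G,H)` over all `m`-fold covers. -/
noncomputable def PDP {V : Type*} (G : SimpleGraph V) (m : ℕ) : ℕ :=
  sInf {n | ∃ (W : Type) (C : DPCover G W), (∀ v, Nat.card ↥(C.L v) = m) ∧ n = PDPCount C}

/-- A cover is full if the matching between the lists of adjacent vertices is perfect. -/
def DPCover.IsFull {V W : Type*} {G : SimpleGraph V} (C : DPCover G W) : Prop :=
  ∀ ⦃u v : V⦄, G.Adj u v → ∀ x ∈ C.L u, ∃! y, y ∈ C.L v ∧ C.H.Adj x y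

/-!
Write `G = Θ(2, l, 2)` with `l = k + 2`: ends `u`, `v`, middle vertices `a`, `b` of the two short
paths, inner vertices `p 0, …, p k` of the long one. For a 3-assignment `L`,
`P(G, L) = ∑_{c ∈ L u, d ∈ L v} |L a \ {c, d}| · |L b \ {c, d}| · N(c, d)`,
where `N(c, d)` counts the `L`-colorings of the long path with end colors `c` and `d`. Induction
along the path, tracking lower bounds for one, two and three end colors at once, gives
`3 N(c, d) + 2 ≥ 2 ^ l` for odd `l`, and `∑_d N(c, d) ≥ 2 ^ l` over any three colors `d`. The
weights are at least `1` and add up to at least `18`, so `P(G, L) ≥ 6 · 2 ^ l - 6`. This is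
`P(G, 3)`: for equal lists `3 N(c, c) = 2 ^ l - 2` and `3 N(c, d) = 2 ^ l + 1`.
-/

theorem Finset.sum_erase_add_ite {ι M : Type*} [DecidableEq ι] [AddCommMonoid M] (s : Finset ι)
    (f : ι → M) (a : ι) : ∑ x ∈ s.erase a, f x + (if a ∈ s then f a else 0) = ∑ x ∈ s, f x := by
  split_ifs with ha
  · exact Finset.sum_erase_add _ _ ha
  · rw [Finset.erase_eq_of_notMem ha, add_zero]

theorem SimpleGraph.fromRel_adj_imp_ne_iff {V α : Type*} {r : V → V → Prop} (hr : ∀ x, ¬ r x x)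
    {f : V → α} :
    (∀ ⦃x y⦄, (fromRel r).Adj x y → f x ≠ f y) ↔ ∀ x y, r x y → f x ≠ f y := by
  refine ⟨fun h x y hxy => h ((fromRel_adj r x y).mpr ⟨?_, .inl hxy⟩), fun h x y hxy => ?_⟩
  · rintro rfl
    exact hr x hxy
  · rcases ((fromRel_adj r x y).mp hxy).2 with hxy | hyx
    · exact h x y hxy
    · exact (h y x hyx).symm

theorem Fin.forall_val_add_one_eq_iff {m : ℕ} {R : Fin (m + 1) → Fin (m + 1) → Prop} :
    (∀ i j : Fin (m + 1), (i : ℕ) + 1 = j → R i j) ↔ ∀ i : Fin m, R i.castSucc i.succ := by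
  refine ⟨fun h i => h _ _ (by simp), fun h i j hij => ?_⟩
  obtain ⟨i', rfl⟩ : ∃ i' : Fin m, i'.castSucc = i := ⟨⟨i, by omega⟩, rfl⟩
  obtain rfl : j = i'.succ := Fin.ext (by simp [← hij])
  exact h i'

section CardSdiff

variable {α : Type*} [DecidableEq α]

theorem Finset.card_sdiff_pair_add (A : Finset α) (c d : α) :
    #(A \ {c, d}) + (if d ∈ A then 1 else 0) + (if c ∈ A ∧ c ≠ d then 1 else 0) = #A := by
  have hmem : c ∈ A ∧ c ≠ d ↔ c ∈ A.erase d := by rw [Finset.mem_erase, and_comm]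
  simp only [Finset.sdiff_insert, Finset.sdiff_singleton_eq_erase, hmem]
  split_ifs with hd hc hc
  · rw [Finset.card_erase_add_one hc, Finset.card_erase_add_one hd]
  · rw [Finset.erase_eq_of_notMem hc, Finset.card_erase_add_one hd]
  · rw [Finset.erase_eq_of_notMem hd] at hc ⊢
    rw [Finset.card_erase_add_one hc]
  · rw [Finset.erase_eq_of_notMem hd] at hc ⊢
    rw [Finset.erase_eq_of_notMem hc, add_zero, add_zero]

theorem Finset.one_le_card_sdiff_pair {A : Finset α} (hA : #A = 3) (c d : α) :
    1 ≤ #(A \ {c, d}) := by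
  have := Finset.le_card_sdiff {c, d} A
  have := Finset.card_le_two (a := c) (b := d)
  omega

-- A lower bound linear in indicators, so that its double sum can be evaluated.
theorem Finset.le_card_sdiff_mul_card_sdiff {A B : Finset α} (hA : #A = 3) (hB : #B = 3) (c d : α) :
    1 + 3 * (if c = d then 1 else 0) + (if c ∉ A then 1 else 0) + (if d ∉ A then 1 else 0) ≤
      #(A \ {c, d}) * #(B \ {c, d}) := by
  have hA' := A.card_sdiff_pair_add c d
  have hB' := B.card_sdiff_pair_add c d
  by_cases hcd : c = d
  · subst hcd
    simp only [ne_eq, not_true_eq_false, and_false, if_false, if_true, add_zero] at hA' hB' ⊢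
    have : 2 ≤ #(B \ {c, c}) := by split_ifs at hB' <;> omega
    calc _ ≤ #(A \ {c, c}) * 2 := by split_ifs at hA' ⊢ <;> omega
      _ ≤ _ := Nat.mul_le_mul_left _ this
  · simp only [hcd, ne_eq, not_false_eq_true, and_true, if_false] at hA' hB' ⊢
    have : 1 ≤ #(B \ {c, d}) := by split_ifs at hB' <;> omega
    calc _ ≤ #(A \ {c, d}) * 1 := by split_ifs at hA' ⊢ <;> omega
      _ ≤ _ := Nat.mul_le_mul_left _ this

theorem Finset.three_le_card_sdiff_add_card_sdiff_add_card_inter {U V A : Finset α} (hU : #U = 3)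
    (hV : #V = 3) (hA : #A = 3) : 3 ≤ #(U \ A) + #(V \ A) + #(U ∩ V) := by
  have h₁ := Finset.card_union_add_card_inter U V
  have h₂ := Finset.le_card_sdiff A (U ∪ V)
  have h₃ := Finset.card_union_le (U \ A) (V \ A)
  rw [← Finset.union_sdiff_distrib] at h₃
  omega

theorem Finset.eighteen_le_sum_card_sdiff_mul_card_sdiff {U V A B : Finset α} (hU : #U = 3)
    (hV : #V = 3) (hA : #A = 3) (hB : #B = 3) :
    18 ≤ ∑ c ∈ U, ∑ d ∈ V, #(A \ {c, d}) * #(B \ {c, d}) := by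
  have hsum : ∑ c ∈ U, ∑ d ∈ V, (1 + 3 * (if c = d then 1 else 0) + (if c ∉ A then 1 else 0) +
      (if d ∉ A then 1 else 0)) = 9 + 3 * #(U ∩ V) + 3 * #(U \ A) + 3 * #(V \ A) := by
    simp only [Finset.sum_add_distrib, Finset.sum_const, ← Finset.mul_sum, Finset.sum_ite_eq,
      hU, hV, smul_eq_mul, Finset.sum_boole, Finset.filter_mem_eq_inter,
      Finset.filter_notMem_eq_sdiff, Nat.cast_id]
  have := Finset.three_le_card_sdiff_add_card_sdiff_add_card_inter hU hV hA
  calc 18 ≤ 9 + 3 * #(U ∩ V) + 3 * #(U \ A) + 3 * #(V \ A) := by omega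
    _ ≤ _ := hsum ▸ Finset.sum_le_sum fun c _ => Finset.sum_le_sum fun d _ =>
      Finset.le_card_sdiff_mul_card_sdiff hA hB c d

end CardSdiff

theorem Finset.mul_sum_add_sum_le {ι : Type*} (s : Finset ι) {w N : ι → ℕ} {m : ℕ}
    (hw : ∀ i ∈ s, 1 ≤ w i) (hN : ∀ i ∈ s, m ≤ N i) :
    m * ∑ i ∈ s, w i + ∑ i ∈ s, N i ≤ ∑ i ∈ s, w i * N i + #s * m := by
  rw [Finset.mul_sum, ← Finset.sum_add_distrib, ← smul_eq_mul, ← Finset.sum_const,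
    ← Finset.sum_add_distrib]
  -- termwise, `(w i - 1) * (N i - m) ≥ 0`
  exact Finset.sum_le_sum fun i hi => by nlinarith [hw i hi, hN i hi]

theorem pListFn_le_pChrom {V : Type*} (G : SimpleGraph V) (m : ℕ) : PListFn G m ≤ PChrom G m :=
  Nat.sInf_le ⟨fun _ => Finset.Icc 1 m, fun _ => by simp, rfl⟩

theorem le_pListFn {V : Type*} {G : SimpleGraph V} {m n : ℕ}
    (h : ∀ L : V → Finset ℕ, (∀ v, #(L v) = m) → n ≤ PList G L) : n ≤ PListFn G m :=
  le_csInf ⟨_, fun _ => Finset.Icc 1 m, fun _ => by simp, rfl⟩ fun _ ⟨L, hL, hn⟩ => hn ▸ h L hL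

theorem two_pow_add_two_mod_three {k : ℕ} (hk : Odd k) : 2 ^ (k + 2) % 3 = 2 := by
  obtain ⟨j, rfl⟩ := hk
  rw [show 2 * j + 1 + 2 = 2 * (j + 1) + 1 by ring, pow_succ, pow_mul, Nat.mul_mod, Nat.pow_mod]
  norm_num

def pathCount : (k : ℕ) → (Fin k → Finset ℕ) → ℕ → ℕ → ℕ
  | 0, _, c, d => if c = d then 0 else 1
  | k + 1, Ls, c, d => ∑ e ∈ (Ls 0).erase c, pathCount k (Fin.tail Ls) e d

/-- `g` properly colors the inner vertices of the path `c — g 0 — ⋯ — g (k - 1) — d` from the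
lists `Ls`; the end colors `c` and `d` are fixed. -/
def IsPathColoring : (k : ℕ) → (Fin k → Finset ℕ) → ℕ → ℕ → (Fin k → ℕ) → Prop
  | 0, _, c, d, _ => c ≠ d
  | k + 1, Ls, c, d, g => g 0 ∈ (Ls 0).erase c ∧ IsPathColoring k (Fin.tail Ls) (g 0) d (Fin.tail g)

theorem isPathColoring_succ_iff {k : ℕ} {Ls : Fin (k + 1) → Finset ℕ} {c d : ℕ}
    {g : Fin (k + 1) → ℕ} : IsPathColoring (k + 1) Ls c d g ↔
      (∀ i, g i ∈ Ls i) ∧ g 0 ≠ c ∧ (∀ i : Fin k, g i.castSucc ≠ g i.succ) ∧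
        g (Fin.last k) ≠ d := by
  induction k generalizing c with
  | zero =>
    simp only [IsPathColoring, Fin.forall_fin_succ, IsEmpty.forall_iff, Fin.last_zero,
      Finset.mem_erase]
    tauto
  | succ k ih =>
    rw [IsPathColoring, ih]
    simp only [Fin.forall_fin_succ, Finset.mem_erase, Fin.tail, Fin.succ_castSucc, Fin.succ_last,
      Fin.castSucc_zero, Fin.succ_zero_eq_one, ne_comm]
    tauto

def isPathColoringSuccEquiv (k : ℕ) (Ls : Fin (k + 1) → Finset ℕ) (c d : ℕ) :
    {g // IsPathColoring (k + 1) Ls c d g} ≃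
      Σ e : (Ls 0).erase c, {g // IsPathColoring k (Fin.tail Ls) e d g} where
  toFun g := ⟨⟨g.1 0, g.2.1⟩, ⟨Fin.tail g.1, g.2.2⟩⟩
  invFun s := ⟨Fin.cons s.1 s.2.1, by
    simp only [IsPathColoring, Fin.cons_zero, Fin.tail_cons]; exact ⟨s.1.2, s.2.2⟩⟩
  left_inv g := Subtype.ext (Fin.cons_self_tail g.1)
  right_inv _ := rfl

instance (k : ℕ) (Ls : Fin k → Finset ℕ) (c d : ℕ) : Finite {g // IsPathColoring k Ls c d g} := by
  induction k generalizing c with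
  | zero => infer_instance
  | succ k ih => exact Finite.of_equiv _ (isPathColoringSuccEquiv k Ls c d).symm

theorem card_isPathColoring (k : ℕ) (Ls : Fin k → Finset ℕ) (c d : ℕ) :
    Nat.card {g // IsPathColoring k Ls c d g} = pathCount k Ls c d := by
  induction k generalizing c with
  | zero => by_cases hcd : c = d <;> simp [IsPathColoring, pathCount, hcd]
  | succ k ih =>
    rw [Nat.card_congr (isPathColoringSuccEquiv k Ls c d), Nat.card_sigma, pathCount,
      ← Finset.sum_coe_sort ((Ls 0).erase c)]
    exact Fintype.sum_congr _ _ fun e => ih _ e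

/-- Lower bounds on `N c = pathCount k Ls c d` for one, two and three distinct `c`. All three are
attained when the lists are equal, and only together do they survive the step `erase_sum`. -/
structure PathCountBounds (k : ℕ) (N : ℕ → ℕ) : Prop where
  single : ∀ c, 2 ^ (k + 1) ≤ 3 * N c + (2 - k % 2)
  pair : ∀ c c', c ≠ c' → 2 ^ (k + 2) ≤ 3 * (N c + N c') + (1 + k % 2)
  triple : ∀ c c' c'', c ≠ c' → c ≠ c'' → c' ≠ c'' → 2 ^ (k + 1) ≤ N c + N c' + N c''

namespace PathCountBounds

variable {k : ℕ} {N : ℕ → ℕ} {S : Finset ℕ}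

theorem zero (d : ℕ) : PathCountBounds 0 (fun c => if c = d then 0 else 1) where
  single c := by split <;> omega
  pair c c' h := by split_ifs <;> omega
  triple c c' c'' h h' h'' := by split_ifs <;> omega

theorem le_sum (h : PathCountBounds k N) (hS : #S = 3) : 2 ^ (k + 1) ≤ ∑ e ∈ S, N e := by
  obtain ⟨x, y, z, hxy, hxz, hyz, rfl⟩ := Finset.card_eq_three.mp hS
  rw [Finset.sum_insert (by simp [hxy, hxz]), Finset.sum_pair hyz, ← add_assoc]
  exact h.triple x y z hxy hxz hyz

theorem erase_single (h : PathCountBounds k N) (hS : #S = 3) (c : ℕ) :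
    2 ^ (k + 2) ≤ 3 * ∑ e ∈ S.erase c, N e + (2 - (k + 1) % 2) := by
  by_cases hc : c ∈ S
  · obtain ⟨x, y, hxy, hE⟩ := Finset.card_eq_two.mp (by rw [Finset.card_erase_of_mem hc, hS])
    rw [hE, Finset.sum_pair hxy]
    have := h.pair x y hxy
    omega
  · rw [Finset.erase_eq_of_notMem hc]
    have := h.le_sum hS
    rw [pow_succ]
    omega

theorem erase_pair (h : PathCountBounds k N) (hS : #S = 3) (c c' : ℕ) (hcc' : c ≠ c') :
    2 ^ (k + 3) ≤ 3 * (∑ e ∈ S.erase c, N e + ∑ e ∈ S.erase c', N e) + (1 + (k + 1) % 2) := by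
  have hT := h.le_sum hS
  have hc := h.erase_single hS c
  have hc' := h.erase_single hS c'
  have hpow : 2 ^ (k + 3) = 4 * 2 ^ (k + 1) := by ring
  have hpow' : 2 ^ (k + 2) = 2 * 2 ^ (k + 1) := by ring
  by_cases hin : c ∈ S ∧ c' ∈ S
  · obtain ⟨g, hg⟩ := (Finset.card_eq_one (s := (S.erase c).erase c')).mp (by
      rw [Finset.card_erase_of_mem (Finset.mem_erase.mpr ⟨hcc'.symm, hin.2⟩),
        Finset.card_erase_of_mem hin.1, hS])
    have hT' : ∑ e ∈ S, N e = N c + N c' + N g := by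
      rw [← Finset.add_sum_erase _ _ hin.1, ← Finset.add_sum_erase _ _
        (Finset.mem_erase.mpr ⟨hcc'.symm, hin.2⟩), hg, Finset.sum_singleton, add_assoc]
    have hsc := Finset.sum_erase_add_ite S N c
    have hsc' := Finset.sum_erase_add_ite S N c'
    rw [if_pos hin.1] at hsc
    rw [if_pos hin.2] at hsc'
    have := h.single g
    omega
  · have : ∑ e ∈ S.erase c, N e = ∑ e ∈ S, N e ∨ ∑ e ∈ S.erase c', N e = ∑ e ∈ S, N e := by
      rcases not_and_or.mp hin with hc | hc
      · exact .inl (by rw [Finset.erase_eq_of_notMem hc])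
      · exact .inr (by rw [Finset.erase_eq_of_notMem hc])
    omega

theorem erase_triple (h : PathCountBounds k N) (hS : #S = 3) (c c' c'' : ℕ)
    (h₁ : c ≠ c') (h₂ : c ≠ c'') (h₃ : c' ≠ c'') :
    2 ^ (k + 2) ≤ ∑ e ∈ S.erase c, N e + ∑ e ∈ S.erase c', N e + ∑ e ∈ S.erase c'', N e := by
  have hT := h.le_sum hS
  have hind : ∑ x ∈ {c, c', c''}, (if x ∈ S then N x else 0) ≤ ∑ e ∈ S, N e := by
    rw [Finset.sum_ite_mem]
    exact Finset.sum_le_sum_of_subset Finset.inter_subset_right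
  rw [Finset.sum_insert (by simp [h₁, h₂]), Finset.sum_pair h₃] at hind
  have := Finset.sum_erase_add_ite S N c
  have := Finset.sum_erase_add_ite S N c'
  have := Finset.sum_erase_add_ite S N c''
  rw [pow_succ]
  omega

theorem erase_sum (h : PathCountBounds k N) (hS : #S = 3) :
    PathCountBounds (k + 1) (fun c => ∑ e ∈ S.erase c, N e) where
  single := h.erase_single hS
  pair := h.erase_pair hS
  triple := h.erase_triple hS

end PathCountBounds

theorem pathCountBounds_pathCount (k : ℕ) (Ls : Fin k → Finset ℕ) (hLs : ∀ i, #(Ls i) = 3)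
    (d : ℕ) : PathCountBounds k (fun c => pathCount k Ls c d) := by
  induction k with
  | zero => exact PathCountBounds.zero d
  | succ k ih => exact (ih (Fin.tail Ls) (fun i => hLs i.succ)).erase_sum (hLs 0)

theorem pow_le_sum_pathCount (k : ℕ) (Ls : Fin k → Finset ℕ) (hLs : ∀ i, #(Ls i) = 3)
    (c : ℕ) {D : Finset ℕ} (hD : #D = 3) : 2 ^ (k + 1) ≤ ∑ d ∈ D, pathCount k Ls c d := by
  induction k generalizing c with
  | zero =>
    calc 2 ^ 1 ≤ #(D.erase c) := by
          have := Finset.pred_card_le_card_erase (s := D) (a := c); omega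
      _ = ∑ d ∈ D.erase c, pathCount 0 Ls c d :=
        (Finset.card_eq_sum_ones _).trans <| Finset.sum_congr rfl fun d hd => by
          simp [pathCount, (Finset.ne_of_mem_erase hd).symm]
      _ ≤ ∑ d ∈ D, pathCount 0 Ls c d := Finset.sum_le_sum_of_subset (Finset.erase_subset c D)
  | succ k ih =>
    have hcard : 2 ≤ #((Ls 0).erase c) := by
      have := Finset.pred_card_le_card_erase (s := Ls 0) (a := c); rw [hLs 0] at this; omega
    calc 2 ^ (k + 2) ≤ #((Ls 0).erase c) * 2 ^ (k + 1) := by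
          rw [pow_succ 2 (k + 1), mul_comm]; gcongr
      _ ≤ ∑ e ∈ (Ls 0).erase c, ∑ d ∈ D, pathCount k (Fin.tail Ls) e d :=
        Finset.card_nsmul_le_sum _ _ _ fun e _ => ih (Fin.tail Ls) (fun i => hLs i.succ) e
      _ = ∑ d ∈ D, pathCount (k + 1) Ls c d := Finset.sum_comm

-- For `c = d` the right side counts the proper 3-colorings of a cycle of length `k + 1`.
theorem pathCount_const (k : ℕ) {C : Finset ℕ} (hC : #C = 3) {c d : ℕ} (hc : c ∈ C)
    (hd : d ∈ C) : (3 * pathCount k (fun _ => C) c d : ℤ) =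
      2 ^ (k + 1) + (if c = d then 2 else -1) * (-1) ^ (k + 1) := by
  induction k generalizing c with
  | zero => split_ifs <;> simp [pathCount, *]
  | succ k ih =>
    simp only [pathCount, Fin.tail_def, Nat.cast_sum, Finset.mul_sum]
    split_ifs with hcd
    · subst hcd
      rw [Finset.sum_congr rfl fun e he => ih (Finset.mem_of_mem_erase he),
        Finset.sum_congr rfl fun e he => by rw [if_neg (Finset.ne_of_mem_erase he)],
        Finset.sum_const, Finset.card_erase_of_mem hc, hC]
      simp only [nsmul_eq_mul]
      ring
    · obtain ⟨g, hg⟩ := (Finset.card_eq_one (s := (C.erase c).erase d)).mp (by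
        rw [Finset.card_erase_of_mem (Finset.mem_erase.mpr ⟨Ne.symm hcd, hd⟩),
          Finset.card_erase_of_mem hc, hC])
      have hgd : g ≠ d := Finset.ne_of_mem_erase (hg ▸ Finset.mem_singleton_self g)
      rw [← Finset.add_sum_erase _ _ (Finset.mem_erase.mpr ⟨Ne.symm hcd, hd⟩), hg,
        Finset.sum_singleton, ih hd, ih (Finset.mem_of_mem_erase (Finset.mem_of_mem_erase
          (hg ▸ Finset.mem_singleton_self g))), if_pos rfl, if_neg hgd]
      ring

namespace ThetaTwoTwo

variable (k : ℕ)

-- The ends, the middle vertices of the two paths of length 2, and the inner vertices of the third.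
def u : ThetaVert 2 (k + 2) 2 := Sum.inl false
def v : ThetaVert 2 (k + 2) 2 := Sum.inl true
def a : ThetaVert 2 (k + 2) 2 := Sum.inr ⟨0, (0 : Fin 1)⟩
def b : ThetaVert 2 (k + 2) 2 := Sum.inr ⟨2, (0 : Fin 1)⟩
def p (j : Fin (k + 1)) : ThetaVert 2 (k + 2) 2 := Sum.inr ⟨1, j⟩

variable {k}

theorem forall_vert {P : ThetaVert 2 (k + 2) 2 → Prop} :
    (∀ x, P x) ↔ P (u k) ∧ P (v k) ∧ P (a k) ∧ P (b k) ∧ ∀ j, P (p k j) := by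
  refine ⟨fun h => ⟨h _, h _, h _, h _, fun j => h _⟩, ?_⟩
  rintro ⟨hu, hv, ha, hb, hp⟩ ((_ | _) | ⟨i, j⟩)
  · exact hu
  · exact hv
  · match i, j with
    | 0, ⟨0, _⟩ => exact ha
    | 1, j => exact hp j
    | 2, ⟨0, _⟩ => exact hb

theorem thetaRel_irrefl (x : ThetaVert 2 (k + 2) 2) : ¬ thetaRel 2 (k + 2) 2 x x := by
  rcases x with (_ | _) | ⟨i, j⟩ <;> simp [thetaRel]

theorem properLColoring_iff {L : ThetaVert 2 (k + 2) 2 → Finset ℕ}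
    {f : ThetaVert 2 (k + 2) 2 → ℕ} :
    ProperLColoring (thetaGraph 2 (k + 2) 2) L f ↔
      f (u k) ∈ L (u k) ∧ f (v k) ∈ L (v k) ∧ f (a k) ∈ L (a k) \ {f (u k), f (v k)} ∧
        f (b k) ∈ L (b k) \ {f (u k), f (v k)} ∧
        IsPathColoring (k + 1) (L ∘ p k) (f (u k)) (f (v k)) (f ∘ p k) := by
  rw [ProperLColoring, thetaGraph, SimpleGraph.fromRel_adj_imp_ne_iff thetaRel_irrefl]
  simp only [forall_vert (P := fun x => ∀ y, _), forall_vert (P := fun y => _)]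
  have hlast : ∀ j : Fin (k + 1), (j : ℕ) = k ↔ j = Fin.last k := fun j => by
    simp [Fin.ext_iff]
  simp only [u, Nat.succ_eq_add_one, Nat.reduceAdd, v, a, Fin.isValue, b, p, thetaRel, ne_eq,
    not_true_eq_false, imp_self, OfNat.ofNat_ne_one, Nat.reduceEqDiff, or_self,
    eq_comm (a := f (Sum.inl false)), IsEmpty.forall_iff, Matrix.cons_val_zero, Nat.add_one_sub_one,
    Fin.val_eq_zero, forall_const, Matrix.cons_val, Matrix.cons_val_one, Fin.val_eq_zero_iff,
    forall_eq, true_and, and_self, zero_add, one_ne_zero, and_false, Fin.reduceEq,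
    zero_ne_one, false_and, and_true, Nat.add_right_cancel_iff, hlast, Nat.add_eq_zero_iff,
    forall_and, Fin.forall_val_add_one_eq_iff, mem_sdiff, mem_insert, mem_singleton, not_or,
    isPathColoring_succ_iff, Function.comp_apply]
  tauto

variable (k) in
def ofParts (c d x y : ℕ) (g : Fin (k + 1) → ℕ) : ThetaVert 2 (k + 2) 2 → ℕ
  | Sum.inl false => c
  | Sum.inl true => d
  | Sum.inr ⟨0, _⟩ => x
  | Sum.inr ⟨1, j⟩ => g j
  | Sum.inr ⟨2, _⟩ => y

theorem ofParts_apply_self (f : ThetaVert 2 (k + 2) 2 → ℕ) :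
    ofParts k (f (u k)) (f (v k)) (f (a k)) (f (b k)) (f ∘ p k) = f :=
  funext (forall_vert.mpr ⟨rfl, rfl, rfl, rfl, fun _ => rfl⟩)

variable (k) in
def properLColoringEquiv (L : ThetaVert 2 (k + 2) 2 → Finset ℕ) :
    {f // ProperLColoring (thetaGraph 2 (k + 2) 2) L f} ≃
      Σ c : L (u k), Σ d : L (v k), ↥(L (a k) \ {c.1, d.1}) × ↥(L (b k) \ {c.1, d.1}) ×
        {g // IsPathColoring (k + 1) (L ∘ p k) c d g} where
  toFun f :=
    have hf := properLColoring_iff.mp f.2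
    ⟨⟨_, hf.1⟩, ⟨_, hf.2.1⟩, ⟨_, hf.2.2.1⟩, ⟨_, hf.2.2.2.1⟩, ⟨_, hf.2.2.2.2⟩⟩
  invFun s := ⟨ofParts k s.1 s.2.1 s.2.2.1 s.2.2.2.1 s.2.2.2.2.1,
    properLColoring_iff.mpr ⟨s.1.2, s.2.1.2, s.2.2.1.2, s.2.2.2.1.2, s.2.2.2.2.2⟩⟩
  left_inv f := Subtype.ext (ofParts_apply_self f.1)
  right_inv _ := rfl

theorem pList_eq_sum (L : ThetaVert 2 (k + 2) 2 → Finset ℕ) :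
    PList (thetaGraph 2 (k + 2) 2) L = ∑ c ∈ L (u k), ∑ d ∈ L (v k),
      #(L (a k) \ {c, d}) * #(L (b k) \ {c, d}) * pathCount (k + 1) (L ∘ p k) c d := by
  rw [PList, Nat.card_congr (properLColoringEquiv k L), Nat.card_sigma,
    ← Finset.sum_coe_sort (L (u k))]
  refine Fintype.sum_congr _ _ fun c => ?_
  rw [Nat.card_sigma, ← Finset.sum_coe_sort (L (v k))]
  refine Fintype.sum_congr _ _ fun d => ?_
  rw [Nat.card_prod, Nat.card_prod, Nat.card_eq_finsetCard, Nat.card_eq_finsetCard,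
    card_isPathColoring, mul_assoc]

theorem pList_add_six_ge (hk : Odd k) {L : ThetaVert 2 (k + 2) 2 → Finset ℕ}
    (hL : ∀ x, #(L x) = 3) : 6 * 2 ^ (k + 2) ≤ PList (thetaGraph 2 (k + 2) 2) L + 6 := by
  have hpar : (k + 1) % 2 = 0 := by obtain ⟨j, rfl⟩ := hk; omega
  have hmod := two_pow_add_two_mod_three hk
  have hpow : 2 ^ (k + 1 + 1) = 2 ^ (k + 2) := rfl
  have hN : ∀ x : ℕ × ℕ, (2 ^ (k + 2) - 2) / 3 ≤ pathCount (k + 1) (L ∘ p k) x.1 x.2 := fun x => by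
    have := (pathCountBounds_pathCount (k + 1) (L ∘ p k) (fun _ => hL _) x.2).single x.1
    omega
  have hw : ∀ x : ℕ × ℕ, 1 ≤ #(L (a k) \ {x.1, x.2}) * #(L (b k) \ {x.1, x.2}) := fun x =>
    Nat.mul_le_mul (Finset.one_le_card_sdiff_pair (hL _) _ _)
      (Finset.one_le_card_sdiff_pair (hL _) _ _)
  have hrow : 3 * 2 ^ (k + 2) ≤ ∑ c ∈ L (u k), ∑ d ∈ L (v k), pathCount (k + 1) (L ∘ p k) c d := by
    have := Finset.card_nsmul_le_sum (L (u k)) _ (2 ^ (k + 2))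
      fun c _ => pow_le_sum_pathCount (k + 1) (L ∘ p k) (fun _ => hL _) c (hL (v k))
    rwa [hL, smul_eq_mul] at this
  have hW := Finset.eighteen_le_sum_card_sdiff_mul_card_sdiff (hL (u k)) (hL (v k)) (hL (a k))
    (hL (b k))
  have key := Finset.mul_sum_add_sum_le (L (u k) ×ˢ L (v k)) (fun x _ => hw x) (fun x _ => hN x)
  simp only [Finset.sum_product, Finset.card_product, hL] at key
  have := Nat.mul_le_mul_left ((2 ^ (k + 2) - 2) / 3) hW
  rw [pList_eq_sum]
  omega

theorem pList_const_add_six (hk : Odd k) {C : Finset ℕ} (hC : #C = 3) :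
    PList (thetaGraph 2 (k + 2) 2) (fun _ => C) + 6 = 6 * 2 ^ (k + 2) := by
  have hsign : (-1 : ℤ) ^ (k + 1 + 1) = -1 := (hk.add_even even_two).neg_one_pow
  have hterm : ∀ c ∈ C, ∀ d ∈ C,
      (3 * (#(C \ {c, d}) * #(C \ {c, d}) * pathCount (k + 1) (fun _ => C) c d) : ℤ) =
        if c = d then 4 * (2 ^ (k + 2) - 2) else 2 ^ (k + 2) + 1 := fun c hc d hd => by
    have hw := C.card_sdiff_pair_add c d
    rw [mul_left_comm, pathCount_const (k + 1) hC hc hd, hsign]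
    by_cases hcd : c = d
    · subst hcd
      simp only [hc, ne_eq, not_true_eq_false, and_false, if_true, if_false, add_zero, hC] at hw ⊢
      rw [show #(C \ {c, c}) = 2 by omega]
      push_cast
      ring
    · simp only [hc, hd, hcd, ne_eq, not_false_eq_true, and_true, if_true, if_false, hC] at hw ⊢
      rw [show #(C \ {c, d}) = 1 by omega]
      push_cast
      ring
  have hsum : (3 * PList (thetaGraph 2 (k + 2) 2) (fun _ => C) : ℤ) =
      3 * (4 * (2 ^ (k + 2) - 2)) + 6 * (2 ^ (k + 2) + 1) := by
    rw [pList_eq_sum]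
    push_cast [Finset.mul_sum]
    refine (Finset.sum_congr rfl fun c hc =>
      Finset.sum_congr rfl fun d hd => hterm c hc d hd).trans ?_
    simp only [Finset.sum_ite, Finset.filter_eq, Finset.filter_ne, Finset.sum_const, nsmul_eq_mul]
    rw [Finset.sum_congr rfl fun c hc => by
      rw [if_pos hc, Finset.card_singleton, Finset.card_erase_of_mem hc, hC]]
    simp only [Finset.sum_const, hC]
    push_cast
    ring
  zify
  linarith

theorem pChrom_add_six (hk : Odd k) :
    PChrom (thetaGraph 2 (k + 2) 2) 3 + 6 = 6 * 2 ^ (k + 2) :=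
  pList_const_add_six hk (by simp)

end ThetaTwoTwo

theorem theta_two_odd_two_list_color_function_at_three (l2 : ℕ)
    (ho : Odd l2) (h3 : 3 ≤ l2) :
    PListFn (thetaGraph 2 l2 2) 3 = PChrom (thetaGraph 2 l2 2) 3 := by
  obtain ⟨k, rfl⟩ : ∃ k, l2 = k + 2 := ⟨l2 - 2, by omega⟩
  have hk : Odd k := by simpa [Nat.odd_add] using ho
  have hchrom := ThetaTwoTwo.pChrom_add_six hk
  refine le_antisymm (pListFn_le_pChrom _ _) (le_pListFn fun L hL => ?_)
  have := ThetaTwoTwo.pList_add_six_ge hk hL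
  omega
end

section
/- For l1, l2, l3 ∈ ℕ and G = Θ(l1,l2,l3), for every m ≥ 2, P(G,m) = [((m−1)^{l1+1} − (−1)^{l1}(m−1))((m−1)^{l2+1} − (−1)^{l2}(m−1))((m−1)^{l3+1} − (−1)^{l3}(m−1))] / (m(m−1))^2 + [((m−1)^{l1} + (−1)^{l1}(m−1))((m−1)^{l2} + (−1)^{l2}(m−1))((m−1)^{l3} + (−1)^{l3}(m−1))] / m^2. -/
open SimpleGraph Finset

/-!
Once the colours `a` and `b` of the two end vertices are fixed, the three paths are coloured
independently, so `P(Θ, m) = ∑_{a,b} ∏ᵢ W_{lᵢ}(a, b)`, where `W_l(a, b)` counts the proper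
colourings of a path of length `l` with end colours `a` and `b`. Peeling off one vertex gives
`W_{l+1}(a, b) = ∑_{c ≠ a} W_l(c, b)`, whence `m W_l(a, b) = (m-1)^l + (-1)^l (m [a = b] - 1)`
(the eigenvalues of `J - I` are `m - 1` and `-1`). Summing over the `m` pairs with `a = b` and
the `m (m - 1)` pairs with `a ≠ b` gives the formula.
-/

theorem List.isChain_cons_ofFn_append_singleton {α : Type*} {R : α → α → Prop} {a b : α} :
    ∀ {k : ℕ} (g : Fin k → α), IsChain R (a :: ofFn g ++ [b]) ↔
      (k = 0 → R a b) ∧ (∀ j : Fin k, (j : ℕ) = 0 → R a (g j)) ∧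
      (∀ j j' : Fin k, (j : ℕ) + 1 = j' → R (g j) (g j')) ∧
      (∀ j : Fin k, (j : ℕ) + 1 = k → R (g j) b)
  | 0, g => by simp
  | k + 1, g => by
    rw [cons_append, ofFn_succ, cons_append, isChain_cons_cons,
      ← cons_append, isChain_cons_ofFn_append_singleton]
    simp only [Fin.forall_fin_succ, Fin.val_succ, Fin.val_eq_zero_iff, Fin.coe_ofNat_eq_mod,
      Nat.zero_mod, Nat.add_eq_zero_iff, Nat.add_right_cancel_iff, one_ne_zero, and_false,
      IsEmpty.forall_iff, forall_eq, true_and, eq_comm (a := 0), and_congr_right_iff]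
    tauto

theorem Finset.sum_sum_ite_eq_eq {α R : Type*} [DecidableEq α] [CommRing R] (s : Finset α)
    (x y : R) :
    ∑ a ∈ s, ∑ b ∈ s, (if a = b then x else y) = #s * x + #s * (#s - 1) * y := by
  have hrow (a : α) (ha : a ∈ s) : ∑ b ∈ s, (if a = b then x else y) = x + (#s - 1) * y := by
    rw [← add_sum_erase s _ ha, if_pos rfl,
      sum_congr rfl fun b hb => if_neg (ne_of_mem_erase hb).symm, sum_const,
      card_erase_of_mem ha, nsmul_eq_mul, Nat.cast_pred (card_pos.2 ⟨a, ha⟩)]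
  rw [sum_congr rfl hrow, sum_const, nsmul_eq_mul]
  ring

section PathColorings

variable {α : Type*} [DecidableEq α]

/-- The colourings `g` of the interior of a path `a, g 0, …, g (k - 1), b` of length `k + 1`
whose end vertices carry the colours `a` and `b`. -/
def pathColorings (S : Finset α) (a b : α) (k : ℕ) : Finset (Fin k → α) :=
  {g ∈ Fintype.piFinset fun _ => S | List.IsChain (· ≠ ·) (a :: List.ofFn g ++ [b])}

variable {S : Finset α} {a b : α}

theorem mem_pathColorings {k : ℕ} {g : Fin k → α} :
    g ∈ pathColorings S a b k ↔
      (∀ j, g j ∈ S) ∧ List.IsChain (· ≠ ·) (a :: List.ofFn g ++ [b]) := by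
  rw [pathColorings, mem_filter, Fintype.mem_piFinset]

theorem card_pathColorings_zero : #(pathColorings S a b 0) = if a = b then 0 else 1 := by
  split_ifs with hab <;> simp [pathColorings, hab]

theorem cons_mem_pathColorings {k : ℕ} {c : α} {g : Fin k → α} :
    Fin.cons c g ∈ pathColorings S a b (k + 1) ↔ c ∈ S.erase a ∧ g ∈ pathColorings S c b k := by
  simp only [mem_pathColorings, mem_erase, List.ofFn_succ, List.cons_append,
    List.isChain_cons_cons, Fin.forall_fin_succ, Fin.cons_zero, Fin.cons_succ, ne_eq]
  tauto

theorem card_pathColorings_succ (k : ℕ) :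
    #(pathColorings S a b (k + 1)) = ∑ c ∈ S.erase a, #(pathColorings S c b k) := by
  rw [← card_sigma]
  refine card_nbij' (fun g => ⟨g 0, Fin.tail g⟩) (fun p => Fin.cons p.1 p.2) ?_ ?_ ?_ ?_
  · intro g hg
    rw [mem_coe, ← Fin.cons_self_tail g, cons_mem_pathColorings] at hg
    exact mem_sigma.2 hg
  · rintro ⟨c, g⟩ hcg
    exact cons_mem_pathColorings.2 (mem_sigma.1 hcg)
  · intro g _
    exact Fin.cons_self_tail g
  · rintro ⟨c, g⟩ _
    simp

theorem card_mul_card_pathColorings (ha : a ∈ S) (hb : b ∈ S) (k : ℕ) :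
    (#S : ℤ) * #(pathColorings S a b k) =
      (#S - 1) ^ (k + 1) + (-1) ^ (k + 1) * ((if a = b then (#S : ℤ) else 0) - 1) := by
  induction k generalizing a with
  | zero =>
    rw [card_pathColorings_zero]
    split_ifs <;> push_cast <;> ring
  | succ k ih =>
    have hcard : (#(S.erase a) : ℤ) = #S - 1 := by
      rw [card_erase_of_mem ha, Nat.cast_pred (card_pos.2 ⟨a, ha⟩)]
    rw [card_pathColorings_succ, Nat.cast_sum, mul_sum,
      sum_congr rfl fun c hc => ih (mem_of_mem_erase hc), sum_add_distrib, sum_const,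
      ← mul_sum, sum_sub_distrib, sum_ite_eq', sum_const, nsmul_eq_mul, nsmul_eq_mul, hcard]
    by_cases hab : a = b
    · rw [if_neg (hab ▸ notMem_erase a S), if_pos hab]
      ring
    · rw [if_pos (mem_erase.2 ⟨Ne.symm hab, hb⟩), if_neg hab]
      ring

end PathColorings

theorem cast_card_pathColorings_Icc {m a b l : ℕ} (ha : a ∈ Icc 1 m) (hb : b ∈ Icc 1 m)
    (hl : 1 ≤ l) :
    (#(pathColorings (Icc 1 m) a b (l - 1)) : ℚ) =
      ((m - 1) ^ l + (-1) ^ l * ((if a = b then (m : ℚ) else 0) - 1)) / m := by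
  have hm : (m : ℚ) ≠ 0 := by
    have := (mem_Icc.1 ha).1.trans (mem_Icc.1 ha).2
    positivity
  have := card_mul_card_pathColorings ha hb (l - 1)
  rw [Nat.sub_add_cancel hl, Nat.card_Icc, Nat.add_sub_cancel] at this
  rw [eq_div_iff hm, mul_comm]
  exact_mod_cast this

theorem SimpleGraph.forall_fromRel_adj_ne_iff {V α : Type*} {r : V → V → Prop}
    (hr : ∀ x, ¬ r x x) (f : V → α) :
    (∀ ⦃x y⦄, (fromRel r).Adj x y → f x ≠ f y) ↔ ∀ ⦃x y⦄, r x y → f x ≠ f y := by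
  refine ⟨fun h x y hxy => h ⟨fun e => hr x (e ▸ hxy), .inl hxy⟩, ?_⟩
  rintro h x y ⟨-, hxy | hyx⟩
  exacts [h hxy, (h hyx).symm]

theorem PList_eq_card_filter {V : Type*} [Fintype V] [DecidableEq V] (G : SimpleGraph V)
    [DecidableRel G.Adj] (L : V → Finset ℕ) :
    PList G L = #{f ∈ Fintype.piFinset L | ∀ ⦃u w⦄, G.Adj u w → f u ≠ f w} := by
  rw [PList, ← Nat.card_eq_finsetCard]
  exact Nat.card_congr <| Equiv.subtypeEquivRight fun f => by
    simp [ProperLColoring, Fintype.mem_piFinset]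

section Theta

variable {l1 l2 l3 : ℕ}

theorem thetaRel_irrefl (x : ThetaVert l1 l2 l3) : ¬ thetaRel l1 l2 l3 x x := by
  rcases x with (_ | _) | ⟨i, j⟩ <;> simp [thetaRel]

theorem forall_thetaGraph_adj_ne_iff {α : Type*} (h1 : 1 ≤ l1) (h2 : 1 ≤ l2) (h3 : 1 ≤ l3)
    (f : ThetaVert l1 l2 l3 → α) :
    (∀ ⦃x y⦄, (thetaGraph l1 l2 l3).Adj x y → f x ≠ f y) ↔
      ∀ i, List.IsChain (· ≠ ·)
        (f (.inl false) :: List.ofFn (fun j => f (.inr ⟨i, j⟩)) ++ [f (.inl true)]) := by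
  rw [thetaGraph, SimpleGraph.forall_fromRel_adj_ne_iff thetaRel_irrefl]
  have hend : (∃ i : Fin 3, ![l1, l2, l3] i - 1 = 0) ↔ l1 = 1 ∨ l2 = 1 ∨ l3 = 1 := by
    simp only [Fin.exists_fin_succ, Matrix.cons_val_zero, Matrix.cons_val_succ,
      Matrix.cons_val_fin_one, exists_const]
    omega
  have hlast (i : Fin 3) (j : Fin (![l1, l2, l3] i - 1)) :
      (j : ℕ) + 2 = ![l1, l2, l3] i ↔ (j : ℕ) + 1 = ![l1, l2, l3] i - 1 := by
    have := j.isLt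
    omega
  have hpath : (∀ i (j : Fin (![l1, l2, l3] i - 1)) i' (j' : Fin (![l1, l2, l3] i' - 1)),
      i = i' → (j : ℕ) + 1 = j' → f (.inr ⟨i, j⟩) ≠ f (.inr ⟨i', j'⟩)) ↔
      ∀ i (j j' : Fin (![l1, l2, l3] i - 1)), (j : ℕ) + 1 = j' →
        f (.inr ⟨i, j⟩) ≠ f (.inr ⟨i, j'⟩) := by
    refine ⟨fun h i j j' => h i j i j' rfl, ?_⟩
    rintro h i j _ j' rfl
    exact h i j j'
  simp only [List.isChain_cons_ofFn_append_singleton, forall_and, Sum.forall, Bool.forall_bool,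
    Sigma.forall, thetaRel, ← hend, forall_exists_index, hlast, and_imp, IsEmpty.forall_iff,
    implies_true, true_and, and_true, hpath]
  tauto

theorem PList_thetaGraph_const (h1 : 1 ≤ l1) (h2 : 1 ≤ l2) (h3 : 1 ≤ l3) (S : Finset ℕ) :
    PList (thetaGraph l1 l2 l3) (fun _ => S) =
      ∑ a ∈ S, ∑ b ∈ S, ∏ i, #(pathColorings S a b (![l1, l2, l3] i - 1)) := by
  classical
  rw [PList_eq_card_filter]
  calc _ = #((S ×ˢ S).sigma fun p =>
        Fintype.piFinset fun i => pathColorings S p.1 p.2 (![l1, l2, l3] i - 1)) := by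
        refine card_nbij' (fun f => ⟨(f (.inl false), f (.inl true)), fun i j => f (.inr ⟨i, j⟩)⟩)
          (fun p => fun | .inl false => p.1.1 | .inl true => p.1.2 | .inr ⟨i, j⟩ => p.2 i j)
          ?_ ?_ ?_ ?_
        · intro f hf
          rw [coe_filter, Set.mem_ofPred_eq, Fintype.mem_piFinset,
            forall_thetaGraph_adj_ne_iff h1 h2 h3] at hf
          refine mem_sigma.2 ⟨mem_product.2 ⟨hf.1 _, hf.1 _⟩, Fintype.mem_piFinset.2 fun i => ?_⟩
          exact mem_pathColorings.2 ⟨fun j => hf.1 _, hf.2 i⟩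
        · rintro ⟨⟨a, b⟩, g⟩ hg
          simp only [coe_sigma, Set.mem_sigma_iff, coe_product, Set.mem_prod, mem_coe,
            Fintype.mem_piFinset, mem_pathColorings] at hg
          rw [coe_filter, Set.mem_ofPred_eq, Fintype.mem_piFinset,
            forall_thetaGraph_adj_ne_iff h1 h2 h3]
          refine ⟨?_, fun i => (hg.2 i).2⟩
          rintro ((_ | _) | ⟨i, j⟩)
          exacts [hg.1.1, hg.1.2, (hg.2 i).1 j]
        · intro f _
          funext x
          rcases x with (_ | _) | ⟨i, j⟩ <;> rfl
        · rintro ⟨⟨a, b⟩, g⟩ _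
          rfl
    _ = _ := by
      rw [card_sigma, sum_product]
      simp only [Fintype.card_piFinset]

end Theta

theorem theta_chromatic_polynomial (l1 l2 l3 : ℕ)
    (h1 : 1 ≤ l1) (h2 : 1 ≤ l2) (h3 : 1 ≤ l3) (m : ℕ) (hm : 2 ≤ m) :
    (PChrom (thetaGraph l1 l2 l3) m : ℚ) =
      (((m - 1) ^ (l1 + 1) - (-1) ^ l1 * (m - 1)) *
        ((m - 1) ^ (l2 + 1) - (-1) ^ l2 * (m - 1)) *
        ((m - 1) ^ (l3 + 1) - (-1) ^ l3 * (m - 1))) / (m * (m - 1)) ^ 2 +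
      (((m - 1) ^ l1 + (-1) ^ l1 * (m - 1)) *
        ((m - 1) ^ l2 + (-1) ^ l2 * (m - 1)) *
        ((m - 1) ^ l3 + (-1) ^ l3 * (m - 1))) / m ^ 2 := by
  have hm0 : (m : ℚ) ≠ 0 := by positivity
  have hm1 : (m : ℚ) - 1 ≠ 0 := by
    have : (2 : ℚ) ≤ m := by exact_mod_cast hm
    linarith
  have hprod (a b : ℕ) (ha : a ∈ Icc 1 m) (hb : b ∈ Icc 1 m) :
      ∏ i, (#(pathColorings (Icc 1 m) a b (![l1, l2, l3] i - 1)) : ℚ) =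
        if a = b then
          (((m : ℚ) - 1) ^ l1 + (-1) ^ l1 * (m - 1)) / m *
            (((m - 1) ^ l2 + (-1) ^ l2 * (m - 1)) / m) * (((m - 1) ^ l3 + (-1) ^ l3 * (m - 1)) / m)
        else
          (((m : ℚ) - 1) ^ l1 - (-1) ^ l1) / m *
            (((m - 1) ^ l2 - (-1) ^ l2) / m) * (((m - 1) ^ l3 - (-1) ^ l3) / m) := by
    simp only [Fin.prod_univ_three, Matrix.cons_val, cast_card_pathColorings_Icc ha hb h1,
      cast_card_pathColorings_Icc ha hb h2, cast_card_pathColorings_Icc ha hb h3]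
    split_ifs <;> ring
  rw [PChrom, PList_thetaGraph_const h1 h2 h3]
  push_cast
  rw [sum_congr rfl fun a ha => sum_congr rfl fun b hb => hprod a b ha hb, sum_sum_ite_eq_eq,
    Nat.card_Icc, Nat.add_sub_cancel]
  field_simp
  ring
end

section
/- For every n ≥ 2 and every m with 2 ≤ m ≤ n, the complete bipartite graph K_{n,n^n} satisfies P_ℓ(K_{n,n^n}, m) = 0 and P(K_{n,n^n}, m) > 1. -/
open SimpleGraph Finset

theorem completeBipartite_list_color_function_zero (n : ℕ) (hn : 2 ≤ n)
    (m : ℕ) (hm2 : 2 ≤ m) (hmn : m ≤ n) :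
    PListFn (completeBipartiteGraph (Fin n) (Fin (n ^ n))) m = 0 ∧
    1 < PChrom (completeBipartiteGraph (Fin n) (Fin (n ^ n))) m := by
  classical
  set G := completeBipartiteGraph (Fin n) (Fin (n ^ n)) with hG
  have hm0 : 0 < m := by omega
  constructor
  · -- PListFn = 0
    -- embedding of (Fin m → Fin m) into Fin (n^n)
    have hcard : Fintype.card (Fin m → Fin m) ≤ Fintype.card (Fin (n ^ n)) := by
      simp only [Fintype.card_fun, Fintype.card_fin]
      calc m ^ m ≤ n ^ m := Nat.pow_le_pow_left hmn m
        _ ≤ n ^ n := Nat.pow_le_pow_right (by omega) hmn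
    obtain ⟨e⟩ := Function.Embedding.nonempty_of_card_le hcard
    -- list for a right vertex corresponding to h : Fin m → Fin m
    set B : (Fin m → Fin m) → Finset ℕ :=
      fun h => Finset.image (fun j : Fin m => (j : ℕ) * m + 1 + (h j : ℕ)) Finset.univ with hB
    have hBinj : ∀ h : Fin m → Fin m, Function.Injective
        (fun j : Fin m => (j : ℕ) * m + 1 + (h j : ℕ)) := by
      intro h j k hjk
      simp only at hjk
      by_contra hne
      have hne' : (j : ℕ) ≠ (k : ℕ) := fun hc => hne (Fin.ext hc)
      have hjm := (h j).isLt
      have hkm := (h k).isLt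
      rcases Nat.lt_or_ge (j : ℕ) (k : ℕ) with hlt | hge
      · have h2 : ((j : ℕ) + 1) * m ≤ (k : ℕ) * m := Nat.mul_le_mul_right m hlt
        have e1 : ((j : ℕ) + 1) * m = (j : ℕ) * m + m := by ring
        omega
      · have hlt : (k : ℕ) < (j : ℕ) := by omega
        have h2 : ((k : ℕ) + 1) * m ≤ (j : ℕ) * m := Nat.mul_le_mul_right m hlt
        have e1 : ((k : ℕ) + 1) * m = (k : ℕ) * m + m := by ring
        omega
    have hBcard : ∀ h, (B h).card = m := by
      intro h
      rw [hB]
      rw [Finset.card_image_of_injective _ (hBinj h), Finset.card_univ, Fintype.card_fin]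
    -- the bad list assignment
    set L : (Fin n ⊕ Fin (n ^ n)) → Finset ℕ := fun v =>
      match v with
      | Sum.inl i => Finset.Icc ((i : ℕ) * m + 1) ((i : ℕ) * m + m)
      | Sum.inr r => if hr : ∃ h, e h = r then B hr.choose else Finset.Icc 1 m
      with hL
    have hLcard : ∀ v, (L v).card = m := by
      intro v
      match v with
      | Sum.inl i => simp [hL, Nat.card_Icc]
      | Sum.inr r =>
        by_cases hr : ∃ h, e h = r
        · simp only [hL, dif_pos hr]; exact hBcard _
        · simp [hL, dif_neg hr, Nat.card_Icc]
    have hempty : IsEmpty {f : (Fin n ⊕ Fin (n ^ n)) → ℕ // ProperLColoring G L f} := by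
      constructor
      rintro ⟨f, hmem, hprop⟩
      -- define h from f's values on the left
      have hleft : ∀ j : Fin m, (Fin.castLE hmn j : ℕ) * m + 1 ≤ f (Sum.inl (Fin.castLE hmn j))
          ∧ f (Sum.inl (Fin.castLE hmn j)) ≤ (Fin.castLE hmn j : ℕ) * m + m := by
        intro j
        have := hmem (Sum.inl (Fin.castLE hmn j))
        simpa [hL, Finset.mem_Icc] using this
      set h : Fin m → Fin m := fun j =>
        ⟨f (Sum.inl (Fin.castLE hmn j)) - ((j : ℕ) * m + 1), by
          have := hleft j
          simp only [Fin.coe_castLE] at this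
          omega⟩ with hh
      set r : Fin (n ^ n) := e h with hr
      have hex : ∃ h', e h' = r := ⟨h, rfl⟩
      have hchoose : hex.choose = h := e.injective hex.choose_spec
      have hfr : f (Sum.inr r) ∈ B h := by
        have := hmem (Sum.inr r)
        simp only [hL, dif_pos hex, hchoose] at this
        exact this
      rw [hB] at hfr
      simp only [Finset.mem_image, Finset.mem_univ, true_and] at hfr
      obtain ⟨j, hj⟩ := hfr
      have heq : f (Sum.inr r) = f (Sum.inl (Fin.castLE hmn j)) := by
        have h1 := hleft j
        simp only [Fin.coe_castLE] at h1
        have : (h j : ℕ) = f (Sum.inl (Fin.castLE hmn j)) - ((j : ℕ) * m + 1) := rfl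
        omega
      have hadj : G.Adj (Sum.inl (Fin.castLE hmn j)) (Sum.inr r) := by
        simp [hG]
      exact hprop hadj heq.symm
    have hPL : PList G L = 0 := by
      rw [PList, Nat.card_eq_zero]
      exact Or.inl hempty
    rw [PListFn]
    rw [Nat.sInf_eq_zero]
    exact Or.inl ⟨L, hLcard, hPL.symm⟩
  · -- PChrom > 1
    rw [PChrom, PList]
    set S := {f : (Fin n ⊕ Fin (n ^ n)) → ℕ //
      ProperLColoring G (fun _ => Finset.Icc 1 m) f} with hS
    have hfin : Finite S := by
      apply Finite.of_injective
        (fun s : S => fun v => (⟨min (s.1 v) m, by omega⟩ : Fin (m + 1)))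
      rintro ⟨f, hf⟩ ⟨g, hg⟩ hfg
      have : ∀ v, f v = g v := by
        intro v
        have h1 := hf.1 v
        have h2 := hg.1 v
        simp only [Finset.mem_Icc] at h1 h2
        have := congrFun hfg v
        simp only [Fin.mk.injEq] at this
        omega
      exact Subtype.ext (funext this)
    have := Fintype.ofFinite S
    rw [Nat.card_eq_fintype_card]
    apply Fintype.one_lt_card_iff_nontrivial.mpr
    have hadjne : ∀ (c₁ c₂ : ℕ), c₁ ≠ c₂ → ProperLColoring G (fun _ => Finset.Icc 1 m)
        (Sum.elim (fun _ => c₁) (fun _ => c₂)) → True := fun _ _ _ _ => trivial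
    have hproper : ∀ (c₁ c₂ : ℕ), 1 ≤ c₁ → c₁ ≤ m → 1 ≤ c₂ → c₂ ≤ m → c₁ ≠ c₂ →
        ProperLColoring G (fun _ => Finset.Icc 1 m) (Sum.elim (fun _ => c₁) (fun _ => c₂)) := by
      intro c₁ c₂ h1 h2 h3 h4 hne
      constructor
      · intro v; cases v <;> simp [Finset.mem_Icc] <;> omega
      · intro u w hadj
        rcases u with u | u <;> rcases w with w | w <;>
          simp [hG] at hadj ⊢ <;> omega
    refine ⟨⟨Sum.elim (fun _ => 1) (fun _ => 2), hproper 1 2 le_rfl (by omega) (by omega) hm2 (by omega)⟩,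
      ⟨Sum.elim (fun _ => 2) (fun _ => 1), hproper 2 1 (by omega) hm2 le_rfl (by omega) (by omega)⟩, ?_⟩
    intro hcontra
    have := congrFun (congrArg Subtype.val hcontra) (Sum.inl ⟨0, by omega⟩)
    simp at this
end
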